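/- arXiv:1808.01450 — 2 statements merged into one kernel-verified Lean document; each statement's English description precedes it below -/
import Mathlib

section
/- Let {G_n}_{n∈ω} be a closed tower of Hausdorff topological groups satisfying the Group Condition (GC). Then every compact subset K of (G, τ_BS), where G := ⋃_{n∈ω} G_n carries the Bamboo-Shoot topology, is contained in G_m for some m ∈ ω. -/
open Topology Filter Set Pointwise

/-- The finite product `U k · U (k+1) ⋯ U (k+j)` of a sequence of subsets of a group. -/
def bsProd {G : Type*} [Group G] (U : ℕ → Set G) (k : ℕ) : ℕ → Set G
  | 0 => U k
  | j + 1 => bsProd U k j * U (k + (j + 1))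

/-- `U⁺[k] = ⋃_{n ≥ k} U k · U (k+1) ⋯ U n`. -/
def bsPlus {G : Type*} [Group G] (U : ℕ → Set G) (k : ℕ) : Set G :=
  ⋃ j, bsProd U k j

/-- The Bamboo-Shoot set `U[k] = (U⁺[k])⁻¹ · U⁺[k]`. -/
def bsU {G : Type*} [Group G] (U : ℕ → Set G) (k : ℕ) : Set G :=
  (bsPlus U k)⁻¹ * bsPlus U k

/-- A tower of topological groups inside an ambient (abstract) group `G`:
an increasing sequence of subgroups covering `G`, each carrying its own group topology,
such that all inclusions `G_n → G_{n+1}` are continuous. -/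
structure GroupTower (G : Type*) [Group G] where
  H : ℕ → Subgroup G
  τ : ∀ n, TopologicalSpace (H n)
  topGroup : ∀ n, @IsTopologicalGroup (H n) (τ n) _
  mono : ∀ n, H n ≤ H (n + 1)
  union : ∀ g : G, ∃ n, g ∈ H n
  incl_cont : ∀ n, Continuous[τ n, τ (n + 1)] (Subgroup.inclusion (mono n))

namespace GroupTower

variable {G : Type*} [Group G]

/-- The tower is closed: each `G_n` carries the subspace topology from `G_{n+1}`
and is closed in `G_{n+1}`. -/
def IsClosedTower (T : GroupTower G) : Prop :=
  ∀ n, T.τ n = (T.τ (n + 1)).induced (Subgroup.inclusion (T.mono n)) ∧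
    IsClosed[T.τ (n + 1)] (Set.range (Subgroup.inclusion (T.mono n)))

/-- `U` (viewed as a subset of the ambient group) is an open symmetric neighborhood of
the identity in `G_n`. -/
def NsMem (T : GroupTower G) (n : ℕ) (U : Set G) : Prop :=
  U ⊆ (T.H n : Set G) ∧ IsOpen[T.τ n] (((↑) : T.H n → G) ⁻¹' U) ∧ (1 : G) ∈ U ∧ U⁻¹ = U

/-- The Group Condition (GC). -/
def GC (T : GroupTower G) : Prop :=
  ∀ U : ℕ → Set G, (∀ n, T.NsMem n (U n)) → ∀ k : ℕ,
    ∃ V : ℕ → Set G, (∀ n, T.NsMem n (V n)) ∧ bsU V k ⊆ bsPlus U k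

/-- `τBS` is the Bamboo-Shoot topology of the tower: at every point `g` the sets
`g • U[k]` form a neighborhood base. -/
def IsBambooShoot (T : GroupTower G) (τBS : TopologicalSpace G) : Prop :=
  ∀ g : G, (@nhds G τBS g).HasBasis
    (fun p : (ℕ → Set G) × ℕ => ∀ n, T.NsMem n (p.1 n))
    (fun p => g • bsU p.1 p.2)

/-- `τind` is the inductive limit topology of the tower in the category of topological
spaces: a set is open iff its trace on every `G_n` is open. -/
def IsIndTop (T : GroupTower G) (τind : TopologicalSpace G) : Prop :=
  ∀ A : Set G, IsOpen[τind] A ↔ ∀ n, IsOpen[T.τ n] (((↑) : T.H n → G) ⁻¹' A)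

/-- `t` is a group topology on `G` making all the inclusions `G_n → G` continuous. -/
def IsCompatGroupTopology (T : GroupTower G) (t : TopologicalSpace G) : Prop :=
  @IsTopologicalGroup G t _ ∧ ∀ n, Continuous[T.τ n, t] ((↑) : T.H n → G)

/-- `t` coincides with `τ_gr`, i.e. `(G, t) = glim G_n` : `t` is a group topology making
all inclusions continuous, and it is the finest such topology (every open set of any
such topology is `t`-open). -/
def IsGLim (T : GroupTower G) (t : TopologicalSpace G) : Prop :=
  T.IsCompatGroupTopology t ∧
    ∀ t' : TopologicalSpace G, T.IsCompatGroupTopology t' →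
      ∀ A : Set G, IsOpen[t'] A → IsOpen[t] A

end GroupTower

/-- A topological space is Ascoli if every compact subset of `C_k(X, ℝ)` is
equicontinuous. -/
def IsAscoliSpace (X : Type*) [TopologicalSpace X] : Prop :=
  ∀ K : Set C(X, ℝ), IsCompact K → Equicontinuous fun f : K => (f.1 : X → ℝ)

/-- A family of sets is a k-network. -/
def IsKNetwork {X : Type*} [TopologicalSpace X] (N : Set (Set X)) : Prop :=
  ∀ K U : Set X, IsCompact K → IsOpen U → K ⊆ U →
    ∃ F : Set (Set X), F ⊆ N ∧ F.Finite ∧ K ⊆ ⋃₀ F ∧ ⋃₀ F ⊆ U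

/-- A family of sets is locally finite. -/
def IsLocallyFiniteFamily {X : Type*} [TopologicalSpace X] (N : Set (Set X)) : Prop :=
  ∀ x : X, ∃ V ∈ 𝓝 x, {s ∈ N | (s ∩ V).Nonempty}.Finite

/-- An ℵ-space: a regular space with a σ-locally finite k-network. -/
def IsAlephSpace (X : Type*) [TopologicalSpace X] : Prop :=
  RegularSpace X ∧ ∃ N : ℕ → Set (Set X),
    (∀ n, IsLocallyFiniteFamily (N n)) ∧ IsKNetwork (⋃ n, N n)

/-- An ℵ₀-space: a regular space with a countable k-network. -/
def IsAleph0Space (X : Type*) [TopologicalSpace X] : Prop :=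
  RegularSpace X ∧ ∃ N : Set (Set X), N.Countable ∧ IsKNetwork N

/-- A k_ω-space. -/
def IsKOmegaSpace (X : Type*) [TopologicalSpace X] : Prop :=
  ∃ K : ℕ → Set X, (∀ n, IsCompact (K n)) ∧ (∀ n, K n ⊆ K (n + 1)) ∧
    (⋃ n, K n) = Set.univ ∧
    ∀ A : Set X, IsClosed A ↔ ∀ n, IsClosed (((↑) : K n → X) ⁻¹' A)

/-- An MK_ω-space: a k_ω-space witnessed by metrizable compact sets. -/
def IsMKOmegaSpace (X : Type*) [TopologicalSpace X] : Prop :=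
  ∃ K : ℕ → Set X, (∀ n, IsCompact (K n)) ∧
    (∀ n, TopologicalSpace.MetrizableSpace (K n)) ∧ (∀ n, K n ⊆ K (n + 1)) ∧
    (⋃ n, K n) = Set.univ ∧
    ∀ A : Set X, IsClosed A ↔ ∀ n, IsClosed (((↑) : K n → X) ⁻¹' A)

section BSAux

variable {G : Type*} [Group G]

/-- Key one-step separation lemma in a topological group: if `y` avoids the closure of
`{g} * S`, then there is an open symmetric neighborhood `U` of `1` such that `y` avoids the
closure of `{g} * U * S * U`. -/
lemma bs_step1 {X : Type*} [Group X] [TopologicalSpace X] [IsTopologicalGroup X]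
    (g y : X) (S : Set X) (h : y ∉ closure ({g} * S)) :
    ∃ U : Set X, IsOpen U ∧ (1 : X) ∈ U ∧ U⁻¹ = U ∧ y ∉ closure ({g} * U * S * U) := by
  have hgy : g⁻¹ * y ∉ closure S := by
    intro hc
    apply h
    have himg : closure ({g} * S) = (g * ·) '' closure S := by
      rw [Set.singleton_mul]
      exact ((Homeomorph.mulLeft g).image_closure S).symm
    rw [himg]
    exact ⟨g⁻¹ * y, hc, by group⟩
  set φ : X × X × X → X := fun u => u.1⁻¹ * (g⁻¹ * y) * u.2.2 * u.2.1⁻¹ with hφ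
  have hφc : Continuous φ := by fun_prop
  have hmem : φ ⁻¹' (closure S)ᶜ ∈ 𝓝 ((1, 1, 1) : X × X × X) := by
    apply hφc.continuousAt.preimage_mem_nhds
    apply (isClosed_closure (s := S)).isOpen_compl.mem_nhds
    simpa [hφ] using hgy
  rw [mem_nhds_prod_iff] at hmem
  obtain ⟨A, hA, B, hB, hAB⟩ := hmem
  rw [mem_nhds_prod_iff] at hB
  obtain ⟨C, hC, D, hD, hCD⟩ := hB
  obtain ⟨V, hVsub, hVopen, hV1⟩ := mem_nhds_iff.mp (inter_mem hA (inter_mem hC hD))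
  set U := V ∩ V⁻¹ with hUdef
  have hUopen : IsOpen U := hVopen.inter hVopen.inv
  have hU1 : (1 : X) ∈ U := ⟨hV1, by simpa using hV1⟩
  have hUsym : U⁻¹ = U := by
    rw [hUdef, Set.inter_inv, inv_inv, Set.inter_comm]
  have hUV : U ⊆ V := Set.inter_subset_left
  refine ⟨U, hUopen, hU1, hUsym, ?_⟩
  have hyU : IsOpen (y • U) := hUopen.smul y
  have hdisj : Disjoint ({g} * U * S * U) (y • U) := by
    rw [Set.disjoint_left]
    rintro z hz1 hz2
    obtain ⟨w, hw, u2, hu2, rfl⟩ := hz1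
    obtain ⟨v, hv, s, hs, rfl⟩ := hw
    obtain ⟨g', hg', u1, hu1, rfl⟩ := hv
    rw [Set.mem_singleton_iff] at hg'
    subst hg'
    obtain ⟨u3, hu3, heq⟩ := hz2
    simp only [smul_eq_mul] at heq
    have hy' : y = g' * u1 * s * u2 * u3⁻¹ := by
      rw [← heq]; group
    have hkey : φ (u1, u2, u3) ∈ (closure S)ᶜ :=
      hAB ⟨(hVsub (hUV hu1)).1, hCD ⟨(hVsub (hUV hu2)).2.1, (hVsub (hUV hu3)).2.2⟩⟩
    apply hkey
    apply subset_closure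
    have hφs : φ (u1, u2, u3) = s := by
      simp only [hφ]
      rw [hy']; group
    rw [hφs]; exact hs
  intro hyc
  rw [mem_closure_iff] at hyc
  obtain ⟨z, hz1, hz2⟩ := hyc (y • U) hyU ⟨1, hU1, by simp⟩
  exact Set.disjoint_left.mp hdisj hz2 hz1

namespace GroupTower

variable (T : GroupTower G)

lemma mono_le {a b : ℕ} (h : a ≤ b) : T.H a ≤ T.H b := by
  induction b, h using Nat.le_induction with
  | base => exact le_rfl
  | succ b hb ih => exact ih.trans (T.mono b)

lemma mul_mem_coe {n : ℕ} {S₁ S₂ : Set G} (h1 : S₁ ⊆ (T.H n : Set G))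
    (h2 : S₂ ⊆ (T.H n : Set G)) : S₁ * S₂ ⊆ (T.H n : Set G) := by
  rintro z ⟨a, ha, b, hb, rfl⟩
  exact mul_mem (h1 ha) (h2 hb)

lemma inv_mem_coe {n : ℕ} {S : Set G} (h : S ⊆ (T.H n : Set G)) :
    S⁻¹ ⊆ (T.H n : Set G) := by
  rintro z hz
  exact (inv_mem_iff (H := T.H n)).mp (h hz)

/-- The closure, inside the `n`-th group of the tower, of a subset of `G`,
viewed again as a subset of `G`. -/
def clS (n : ℕ) (S : Set G) : Set G :=
  Subtype.val '' (@closure _ (T.τ n) (Subtype.val ⁻¹' S))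

lemma clS_subset (n : ℕ) (S : Set G) : T.clS n S ⊆ (T.H n : Set G) := by
  rintro z ⟨w, _, rfl⟩; exact w.2

lemma mem_clS {n : ℕ} {S : Set G} {y : G} (hy : y ∈ T.H n) :
    y ∈ T.clS n S ↔ (⟨y, hy⟩ : T.H n) ∈ @closure _ (T.τ n) (Subtype.val ⁻¹' S) := by
  constructor
  · rintro ⟨w, hw, hwy⟩
    have : w = ⟨y, hy⟩ := Subtype.ext hwy
    exact this ▸ hw
  · intro h
    exact ⟨⟨y, hy⟩, h, rfl⟩

lemma subset_clS {n : ℕ} {S : Set G} (hS : S ⊆ (T.H n : Set G)) : S ⊆ T.clS n S := by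
  letI := T.τ n
  intro s hs
  exact ⟨⟨s, hS hs⟩, subset_closure hs, rfl⟩

lemma clS_transfer (hclosed : T.IsClosedTower) {n : ℕ} {S : Set G}
    (hS : S ⊆ (T.H n : Set G)) : T.clS (n + 1) S = T.clS n S := by
  letI := T.τ n
  letI := T.τ (n + 1)
  set ι := Subgroup.inclusion (T.mono n)
  have hemb : Topology.IsClosedEmbedding ι :=
    ⟨⟨⟨(hclosed n).1⟩, Subgroup.inclusion_injective _⟩, (hclosed n).2⟩
  have hpre : (Subtype.val ⁻¹' S : Set (T.H (n + 1))) = ι '' (Subtype.val ⁻¹' S) := by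
    ext z
    constructor
    · intro hz
      refine ⟨⟨z.1, hS hz⟩, hz, rfl⟩
    · rintro ⟨w, hw, rfl⟩
      exact hw
  unfold clS
  rw [hpre, hemb.closure_image_eq]
  ext z
  constructor
  · rintro ⟨w, ⟨v, hv, rfl⟩, rfl⟩
    exact ⟨v, hv, rfl⟩
  · rintro ⟨v, hv, rfl⟩
    exact ⟨ι v, ⟨v, hv, rfl⟩, rfl⟩

lemma nsMem_coe (n : ℕ) : T.NsMem n ((T.H n : Set G)) := by
  letI := T.τ n
  refine ⟨le_rfl, ?_, one_mem _, ?_⟩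
  · have : (Subtype.val ⁻¹' (T.H n : Set G) : Set (T.H n)) = Set.univ := by
      ext z; simp [z.2]
    rw [this]
    exact isOpen_univ
  · ext z; simp [Set.mem_inv, inv_mem_iff (H := T.H n)]

lemma preimage_mul {n : ℕ} {S₁ S₂ : Set G} (h1 : S₁ ⊆ (T.H n : Set G))
    (h2 : S₂ ⊆ (T.H n : Set G)) :
    (Subtype.val ⁻¹' (S₁ * S₂) : Set (T.H n)) =
      (Subtype.val ⁻¹' S₁) * (Subtype.val ⁻¹' S₂) := by
  ext z
  constructor
  · rintro (hz : (z : G) ∈ S₁ * S₂)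
    obtain ⟨a, ha, b, hb, hab⟩ := hz
    refine ⟨⟨a, h1 ha⟩, ha, ⟨b, h2 hb⟩, hb, ?_⟩
    exact Subtype.ext hab
  · rintro ⟨a, ha, b, hb, rfl⟩
    exact ⟨a, ha, b, hb, rfl⟩

lemma preimage_inv {n : ℕ} (S : Set G) :
    (Subtype.val ⁻¹' (S⁻¹) : Set (T.H n)) = (Subtype.val ⁻¹' S)⁻¹ := by
  ext z
  simp [Set.mem_inv]

lemma preimage_singleton {n : ℕ} {g : G} (hg : g ∈ T.H n) :
    (Subtype.val ⁻¹' ({g} : Set G) : Set (T.H n)) = {⟨g, hg⟩} := by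
  ext z
  simp [Subtype.ext_iff]

lemma triple_sub {n : ℕ} {g : G} (hg : g ∈ T.H n) {A : Set G}
    (hA : A ⊆ (T.H n : Set G)) : {g} * A⁻¹ * A ⊆ (T.H n : Set G) :=
  T.mul_mem_coe (T.mul_mem_coe (by simpa using hg) (T.inv_mem_coe hA)) hA

end GroupTower

/-- Abstract recursion with invariant lemma. -/
lemma bs_exists_seq {α : Type*} (Inv : ℕ → α → Prop) (P : ℕ → α → α → Prop) (z : α)
    (hz : Inv 0 z) (hstep : ∀ j a, Inv j a → ∃ b, Inv (j + 1) b ∧ P j a b) :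
    ∃ f : ℕ → α, f 0 = z ∧ (∀ j, Inv j (f j)) ∧ ∀ j, P j (f j) (f (j + 1)) := by
  choose! g hg1 hg2 using hstep
  refine ⟨fun j => Nat.rec z (fun j a => g j a) j, rfl, ?_, ?_⟩
  · intro j
    induction j with
    | zero => exact hz
    | succ j ih => exact hg1 j _ ih
  · intro j
    have hInv : ∀ j, Inv j (Nat.rec z (fun j a => g j a) j) := by
      intro j
      induction j with
      | zero => exact hz
      | succ j ih => exact hg1 j _ ih
    exact hg2 j _ (hInv j)

/-- The inductive step: given the finite product set `A` at level `k+j` whose associated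
"difference set" avoids the points `x m` (`k ≤ m < k+j`) in closure, we can find an open
symmetric neighborhood `U` of `1` at level `k+j+1` preserving this property. -/
lemma bs_exists_step {G : Type*} [Group G] (T : GroupTower G) (hclosed : T.IsClosedTower)
    (g : G) (k : ℕ) (hg : g ∈ T.H k) (x : ℕ → G) (hx : ∀ m, x m ∉ T.H m)
    (j : ℕ) (A : Set G) (hA : A ⊆ (T.H (k + j) : Set G))
    (hQ : ∀ m, k ≤ m → m < k + j → x m ∉ T.clS (k + j) ({g} * A⁻¹ * A)) :
    ∃ U : Set G, T.NsMem (k + j + 1) U ∧ A * U ⊆ (T.H (k + j + 1) : Set G) ∧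
      ∀ m, k ≤ m → m < k + j + 1 →
        x m ∉ T.clS (k + j + 1) ({g} * (A * U)⁻¹ * (A * U)) := by
  classical
  set n := k + j with hn
  letI := T.τ (n + 1)
  haveI := T.topGroup (n + 1)
  have hgk : g ∈ T.H (n + 1) := T.mono_le (by omega) hg
  have hAn1 : A ⊆ (T.H (n + 1) : Set G) := fun a ha => T.mono n (hA ha)
  have hAAsub : A⁻¹ * A ⊆ (T.H (n + 1) : Set G) := T.mul_mem_coe (T.inv_mem_coe hAn1) hAn1
  have hT1sub : {g} * A⁻¹ * A ⊆ (T.H n : Set G) :=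
    T.triple_sub (T.mono_le (by omega) hg) hA
  have hkeyfact : ∀ m, k ≤ m → m ≤ n → x m ∉ T.clS (n + 1) ({g} * A⁻¹ * A) := by
    intro m hkm hmn
    rw [T.clS_transfer hclosed hT1sub]
    rcases lt_or_eq_of_le hmn with hlt | heq
    · exact hQ m hkm hlt
    · intro hc
      have h1 : x m ∈ (T.H n : Set G) := T.clS_subset n _ hc
      rw [← heq] at h1
      exact hx m h1
  set g' : T.H (n + 1) := ⟨g, hgk⟩ with hg'
  set S' : Set (T.H (n + 1)) := Subtype.val ⁻¹' (A⁻¹ * A) with hS'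
  have hpre1 : (Subtype.val ⁻¹' ({g} * A⁻¹ * A) : Set (T.H (n + 1))) = {g'} * S' := by
    rw [mul_assoc, T.preimage_mul (by simpa using hgk) hAAsub, T.preimage_singleton hgk]
  have hW : ∀ m : ℕ, ∃ W : Set (T.H (n + 1)), IsOpen W ∧ (1 : T.H (n + 1)) ∈ W ∧ W⁻¹ = W ∧
      ∀ (_ : k ≤ m ∧ m ≤ n) (hmem : x m ∈ T.H (n + 1)),
        (⟨x m, hmem⟩ : T.H (n + 1)) ∉ closure ({g'} * W * S' * W) := by
    intro m
    by_cases hc : (k ≤ m ∧ m ≤ n) ∧ x m ∈ T.H (n + 1)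
    · obtain ⟨⟨h1, h2⟩, h3⟩ := hc
      have hnc : (⟨x m, h3⟩ : T.H (n + 1)) ∉ closure ({g'} * S') := by
        rw [← hpre1]
        exact fun hcc => hkeyfact m h1 h2 ((T.mem_clS h3).mpr hcc)
      obtain ⟨W, hop, h1w, hsym, hnc'⟩ := bs_step1 g' ⟨x m, h3⟩ S' hnc
      exact ⟨W, hop, h1w, hsym, fun _ _ => hnc'⟩
    · exact ⟨Set.univ, isOpen_univ, trivial, by simp, fun hm hmem => absurd ⟨hm, hmem⟩ hc⟩
  choose W hWo hW1 hWs hWn using hW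
  set U' : Set (T.H (n + 1)) := ⋂ m ∈ Finset.Icc k n, W m with hU'
  have hU'o : IsOpen U' := isOpen_biInter_finset fun m _ => hWo m
  have hU'1 : (1 : T.H (n + 1)) ∈ U' := Set.mem_iInter₂.mpr fun m _ => hW1 m
  have hU's : U'⁻¹ = U' := by
    simp only [hU', Set.iInter_inv, hWs]
  set U : Set G := Subtype.val '' U' with hUdef
  have hUsub : U ⊆ (T.H (n + 1) : Set G) := by
    rintro z ⟨w, _, rfl⟩; exact w.2
  have hUpre : (Subtype.val ⁻¹' U : Set (T.H (n + 1))) = U' :=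
    Set.preimage_image_eq _ Subtype.val_injective
  have hU1G : (1 : G) ∈ U := ⟨1, hU'1, rfl⟩
  have hUsymG : U⁻¹ = U := by
    ext z
    constructor
    · rintro hz
      rw [Set.mem_inv] at hz
      obtain ⟨w, hw, hwz⟩ := hz
      refine ⟨w⁻¹, ?_, ?_⟩
      · rw [← hU's]; simpa using hw
      · simp only [Subgroup.coe_inv, hwz, inv_inv]
    · rintro ⟨w, hw, rfl⟩
      rw [Set.mem_inv]
      refine ⟨w⁻¹, ?_, by simp⟩
      rw [← hU's]; simpa using hw
  have hNsU : T.NsMem (n + 1) U := by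
    refine ⟨hUsub, ?_, hU1G, hUsymG⟩
    rw [hUdef, Set.preimage_image_eq _ Subtype.val_injective]
    exact hU'o
  refine ⟨U, hNsU, T.mul_mem_coe hAn1 hUsub, ?_⟩
  intro m hkm hmn1
  by_cases hmem : x m ∈ T.H (n + 1)
  · intro hc
    have hamb : {g} * (A * U)⁻¹ * (A * U) = {g} * U * (A⁻¹ * A) * U := by
      simp only [mul_inv_rev, hUsymG, mul_assoc]
    rw [hamb] at hc
    have hgUsub : {g} * U ⊆ (T.H (n + 1) : Set G) :=
      T.mul_mem_coe (by simpa using hgk) hUsub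
    have hgUAAsub : {g} * U * (A⁻¹ * A) ⊆ (T.H (n + 1) : Set G) :=
      T.mul_mem_coe hgUsub hAAsub
    have hpre2 : (Subtype.val ⁻¹' ({g} * U * (A⁻¹ * A) * U) : Set (T.H (n + 1))) =
        {g'} * U' * S' * U' := by
      rw [T.preimage_mul hgUAAsub hUsub, T.preimage_mul hgUsub hAAsub,
        T.preimage_mul (by simpa using hgk) hUsub, T.preimage_singleton hgk, hUpre, ← hS']
    have hc' := (T.mem_clS hmem).mp hc
    rw [hpre2] at hc'
    have hUW : U' ⊆ W m := Set.iInter₂_subset m (Finset.mem_Icc.mpr ⟨hkm, by omega⟩)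
    have hmono : {g'} * U' * S' * U' ⊆ {g'} * W m * S' * W m :=
      Set.mul_subset_mul (Set.mul_subset_mul (Set.mul_subset_mul subset_rfl hUW) subset_rfl) hUW
    exact hWn m ⟨hkm, by omega⟩ hmem (closure_mono hmono hc')
  · exact fun hc => hmem (T.clS_subset _ _ hc)

/-- The key construction: for every `g ∈ G_k` and every sequence of points `x m ∉ G_m`,
there is a sequence of open symmetric neighborhoods `U` such that the basic Bamboo-Shoot
neighborhood `g • U[k]` avoids all `x m` with `m ≥ k`. -/
lemma bs_key {G : Type*} [Group G] (T : GroupTower G) (hclosed : T.IsClosedTower)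
    (g : G) (k : ℕ) (hg : g ∈ T.H k) (x : ℕ → G) (hx : ∀ m, x m ∉ T.H m) :
    ∃ U : ℕ → Set G, (∀ n, T.NsMem n (U n)) ∧ ∀ m, k ≤ m → x m ∉ g • bsU U k := by
  classical
  set Inv : ℕ → Set G × Set G → Prop := fun j p =>
    T.NsMem (k + j) p.1 ∧ p.2 ⊆ (T.H (k + j) : Set G) ∧
      ∀ m, k ≤ m → m < k + j → x m ∉ T.clS (k + j) ({g} * p.2⁻¹ * p.2) with hInvDef
  have hbase : Inv 0 ((T.H k : Set G), (T.H k : Set G)) :=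
    ⟨T.nsMem_coe k, le_rfl, fun m h1 h2 => absurd h2 (by omega)⟩
  have hstep : ∀ j p, Inv j p → ∃ q, Inv (j + 1) q ∧ q.2 = p.2 * q.1 := by
    intro j p hp
    obtain ⟨Uj, hU1, hU2, hU3⟩ := bs_exists_step T hclosed g k hg x hx j p.2 hp.2.1 hp.2.2
    exact ⟨(Uj, p.2 * Uj), ⟨hU1, hU2, hU3⟩, rfl⟩
  obtain ⟨f, hf0, hfInv, hfchain⟩ :=
    bs_exists_seq Inv (fun _ p q => q.2 = p.2 * q.1) _ hbase hstep
  set U : ℕ → Set G := fun n => if h : k ≤ n then (f (n - k)).1 else (T.H n : Set G) with hU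
  have hUk : ∀ j, U (k + j) = (f j).1 := by
    intro j
    show (if h : k ≤ k + j then (f (k + j - k)).1 else (T.H (k + j) : Set G)) = (f j).1
    rw [dif_pos (Nat.le_add_right k j), Nat.add_sub_cancel_left]
  have hNs : ∀ n, T.NsMem n (U n) := by
    intro n
    by_cases h : k ≤ n
    · have h2 : n = k + (n - k) := by omega
      show T.NsMem n (if h : k ≤ n then (f (n - k)).1 else (T.H n : Set G))
      rw [dif_pos h]
      have hthis := (hfInv (n - k)).1
      rwa [← h2] at hthis
    · show T.NsMem n (if h : k ≤ n then (f (n - k)).1 else (T.H n : Set G))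
      rw [dif_neg h]
      exact T.nsMem_coe n
  have h1U : ∀ n, (1 : G) ∈ U n := fun n => (hNs n).2.2.1
  have hprod : ∀ j, bsProd U k j = (f j).2 := by
    intro j
    induction j with
    | zero =>
      show U k = (f 0).2
      have h := hUk 0
      rw [Nat.add_zero] at h
      rw [h, hf0]
    | succ j ih =>
      show bsProd U k j * U (k + (j + 1)) = (f (j + 1)).2
      rw [ih, hUk (j + 1), hfchain j]
  refine ⟨U, hNs, ?_⟩
  intro m hkm hmem
  obtain ⟨c, hc, hgc⟩ := hmem
  obtain ⟨a, ha, b, hb, rfl⟩ := hc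
  rw [Set.mem_inv] at ha
  obtain ⟨i, hi⟩ := Set.mem_iUnion.mp ha
  obtain ⟨jj, hjj⟩ := Set.mem_iUnion.mp hb
  set J := max i jj with hJ
  have hmono : ∀ {p q : ℕ}, p ≤ q → bsProd U k p ⊆ bsProd U k q := by
    intro p q h
    induction q, h using Nat.le_induction with
    | base => exact subset_rfl
    | succ q h ih =>
      intro z hz
      exact ⟨z, ih hz, 1, h1U _, mul_one z⟩
  have hai : a⁻¹ ∈ bsProd U k J := hmono (le_max_left _ _) hi
  have hbj : b ∈ bsProd U k J := hmono (le_max_right _ _) hjj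
  simp only [smul_eq_mul] at hgc
  have hxm : x m ∈ {g} * (bsProd U k J)⁻¹ * (bsProd U k J) := by
    refine ⟨g * a, ⟨g, rfl, a, Set.mem_inv.mpr (by simpa using hai), rfl⟩, b, hbj, ?_⟩
    show g * a * b = x m
    rw [mul_assoc]
    exact hgc
  have hsubH : bsProd U k J ⊆ (T.H (k + J) : Set G) := by
    rw [hprod J]; exact (hfInv J).2.1
  by_cases hcase : m < k + J
  · have hQ := (hfInv J).2.2 m hkm hcase
    rw [← hprod J] at hQ
    exact hQ (T.subset_clS (T.triple_sub (T.mono_le (Nat.le_add_right k J) hg) hsubH) hxm)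
  · have hin : x m ∈ (T.H (k + J) : Set G) :=
      T.triple_sub (T.mono_le (Nat.le_add_right k J) hg) hsubH hxm
    exact hx m (T.mono_le (by omega) hin)

end BSAux

/-- For a closed tower of Hausdorff groups satisfying (GC), every compact
subset of `(G, τBS)` is contained in some `G_m`. -/
theorem statement_3 {G : Type*} [Group G] (T : GroupTower G)
    (hclosed : T.IsClosedTower)
    (hT2 : ∀ n, @T2Space (T.H n) (T.τ n))
    (hGC : T.GC)
    (τBS : TopologicalSpace G) (hBS : T.IsBambooShoot τBS) :
    ∀ K : Set G, @IsCompact G τBS K → ∃ m : ℕ, K ⊆ (T.H m : Set G) := by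
  letI := τBS
  intro K hK
  by_contra hcon
  push_neg at hcon
  have hxe : ∀ m : ℕ, ∃ y, y ∈ K ∧ y ∉ (T.H m : Set G) := by
    intro m
    obtain ⟨y, hy1, hy2⟩ := Set.not_subset.mp (hcon m)
    exact ⟨y, hy1, hy2⟩
  choose x hxK hxH using hxe
  have hnb : ∀ g : G, ∃ (kk : ℕ) (N : Set G), N ∈ 𝓝 g ∧ ∀ m, kk ≤ m → x m ∉ N := by
    intro g
    obtain ⟨k, hk⟩ := T.union g
    obtain ⟨U, hU, hmiss⟩ := bs_key T hclosed g k hk x hxH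
    exact ⟨k, g • bsU U k, (hBS g).mem_of_mem (i := (U, k)) hU, hmiss⟩
  choose kk N hN hmiss using hnb
  obtain ⟨t, -, hcov⟩ := hK.elim_nhds_subcover N fun g _ => hN g
  set M := t.sup kk with hM
  have hxM := hcov (hxK M)
  rw [Set.mem_iUnion₂] at hxM
  obtain ⟨g, hgt, hgN⟩ := hxM
  exact hmiss g M (Finset.le_sup hgt) hgN
end

section
/- Let {G_n}_{n∈ω} be a closed tower of metrizable topological groups satisfying the Group Condition (GC), and let G := ⋃_{n∈ω} G_n carry the Bamboo-Shoot topology τ_BS (a Hausdorff group topology coinciding with τ_gr, so G = glim G_n). Then G has a 𝔊-base satisfying condition (D). -/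
open Topology Filter Set Pointwise

section AuxBS

variable {G : Type*} [Group G]

lemma bsProd_mono {U V : ℕ → Set G} {k j : ℕ}
    (h : ∀ i ≤ j, U (k + i) ⊆ V (k + i)) : bsProd U k j ⊆ bsProd V k j := by
  induction j with
  | zero => simpa [bsProd] using h 0 le_rfl
  | succ j ih =>
      exact Set.mul_subset_mul (ih fun i hi => h i (hi.trans (Nat.le_succ j)))
        (h (j + 1) le_rfl)

lemma bsProd_congr {U V : ℕ → Set G} {k j : ℕ}
    (h : ∀ i ≤ j, U (k + i) = V (k + i)) : bsProd U k j = bsProd V k j :=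
  Set.Subset.antisymm (bsProd_mono fun i hi => (h i hi).le)
    (bsProd_mono fun i hi => (h i hi).ge)

lemma one_mem_bsProd {U : ℕ → Set G} (h : ∀ n, (1 : G) ∈ U n) (k j : ℕ) :
    (1 : G) ∈ bsProd U k j := by
  induction j with
  | zero => exact h k
  | succ j ih => simpa [bsProd] using Set.mul_mem_mul ih (h (k + (j + 1)))

lemma bsProd_shift {U : ℕ → Set G} (h : ∀ n, (1 : G) ∈ U n) (k j : ℕ) :
    bsProd U (k + 1) j ⊆ bsProd U k (j + 1) := by
  induction j with
  | zero =>
      intro x hx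
      have : (1 : G) * x ∈ U k * U (k + 1) := Set.mul_mem_mul (h k) hx
      simpa [bsProd] using this
  | succ j ih =>
      intro x hx
      obtain ⟨a, ha, b, hb, rfl⟩ := Set.mem_mul.1 hx
      have hidx : k + 1 + (j + 1) = k + (j + 1 + 1) := by omega
      rw [hidx] at hb
      exact Set.mul_mem_mul (ih ha) hb

lemma bsPlus_antitone_k {U : ℕ → Set G} (h : ∀ n, (1 : G) ∈ U n) {k k' : ℕ}
    (hk : k ≤ k') : bsPlus U k' ⊆ bsPlus U k := by
  induction k', hk using Nat.le_induction with
  | base => exact le_rfl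
  | succ m hm ih =>
      refine le_trans ?_ ih
      intro x hx
      obtain ⟨j, hj⟩ := Set.mem_iUnion.1 hx
      exact Set.mem_iUnion.2 ⟨j + 1, bsProd_shift h m j hj⟩

lemma bsPlus_mono {U V : ℕ → Set G} (h : ∀ n, U n ⊆ V n) (k : ℕ) :
    bsPlus U k ⊆ bsPlus V k :=
  Set.iUnion_mono fun _ => bsProd_mono fun i _ => h _

lemma bsU_mono {U V : ℕ → Set G} (h : ∀ n, U n ⊆ V n) (k : ℕ) :
    bsU U k ⊆ bsU V k :=
  Set.mul_subset_mul (Set.inv_subset_inv.2 (bsPlus_mono h k)) (bsPlus_mono h k)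

lemma bsU_antitone_k {U : ℕ → Set G} (h : ∀ n, (1 : G) ∈ U n) {k k' : ℕ}
    (hk : k ≤ k') : bsU U k' ⊆ bsU U k :=
  Set.mul_subset_mul (Set.inv_subset_inv.2 (bsPlus_antitone_k h hk))
    (bsPlus_antitone_k h hk)

lemma GroupTower.exists_symm_base (T : GroupTower G)
    (hmetr : ∀ n, @TopologicalSpace.MetrizableSpace (T.H n) (T.τ n)) (n : ℕ) :
    ∃ W : ℕ → Set G, (∀ i, T.NsMem n (W i)) ∧ (∀ i j, i ≤ j → W j ⊆ W i) ∧
      ∀ S, T.NsMem n S → ∃ i, W i ⊆ S := by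
  letI := T.τ n
  haveI := T.topGroup n
  haveI := hmetr n
  obtain ⟨B, hB⟩ := (𝓝 (1 : T.H n)).exists_antitone_basis
  set S : ℕ → Set (T.H n) := fun i => interior (B i) ∩ (interior (B i))⁻¹ with hSdef
  have hSsub : ∀ i, S i ⊆ B i := fun i =>
    (Set.inter_subset_left).trans interior_subset
  have hSone : ∀ i, (1 : T.H n) ∈ S i := by
    intro i
    have h1 : (1 : T.H n) ∈ interior (B i) :=
      mem_interior_iff_mem_nhds.2 (hB.toHasBasis.mem_of_mem trivial)
    exact ⟨h1, by simpa using h1⟩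
  have hSopen : ∀ i, IsOpen (S i) := fun i => isOpen_interior.inter isOpen_interior.inv
  have hSsymm : ∀ i, (S i)⁻¹ = S i := by
    intro i
    simp only [hSdef, Set.inter_inv, inv_inv]
    exact Set.inter_comm _ _
  have hSanti : ∀ i j, i ≤ j → S j ⊆ S i := by
    intro i j hij
    have hBij : B j ⊆ B i := hB.antitone hij
    exact Set.inter_subset_inter (interior_mono hBij)
      (Set.inv_subset_inv.2 (interior_mono hBij))
  refine ⟨fun i => ((↑) : T.H n → G) '' S i, ?_, ?_, ?_⟩
  · intro i
    refine ⟨?_, ?_, ?_, ?_⟩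
    · rintro x ⟨y, _, rfl⟩; exact y.2
    · rw [Set.preimage_image_eq _ Subtype.coe_injective]; exact hSopen i
    · exact ⟨1, hSone i, rfl⟩
    · ext x
      simp only [Set.mem_inv, Set.mem_image]
      constructor
      · rintro ⟨y, hy, hyx⟩
        refine ⟨y⁻¹, ?_, ?_⟩
        · rw [← hSsymm i]; exact Set.inv_mem_inv.2 hy
        · rw [← inv_inv x, ← hyx]; rfl
      · rintro ⟨y, hy, rfl⟩
        refine ⟨y⁻¹, ?_, rfl⟩
        rw [← hSsymm i]; exact Set.inv_mem_inv.2 hy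
  · intro i j hij
    exact Set.image_mono (hSanti i j hij)
  · intro S' hS'
    have hO : ((↑) : T.H n → G) ⁻¹' S' ∈ 𝓝 (1 : T.H n) := by
      refine hS'.2.1.mem_nhds ?_
      show ((1 : T.H n) : G) ∈ S'
      simpa using hS'.2.2.1
    obtain ⟨i, -, hBi⟩ := hB.toHasBasis.mem_iff.1 hO
    refine ⟨i, ?_⟩
    intro x hx
    obtain ⟨y, hy, rfl⟩ := hx
    exact hBi (hSsub i hy)

end AuxBS

/-- For a closed tower of metrizable groups satisfying (GC), the group
`(G, τBS) = glim G_n` has a 𝔊-base satisfying condition (D). -/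
theorem statement_4 {G : Type*} [Group G] (T : GroupTower G)
    (hclosed : T.IsClosedTower)
    (hmetr : ∀ n, @TopologicalSpace.MetrizableSpace (T.H n) (T.τ n))
    (hGC : T.GC)
    (τBS : TopologicalSpace G) (hBS : T.IsBambooShoot τBS) :
    ∃ U : (ℕ → ℕ) → Set G,
      (∀ α, U α ∈ @nhds G τBS 1) ∧
      (∀ s : Set G, s ∈ @nhds G τBS 1 → ∃ α, U α ⊆ s) ∧
      (∀ α β : ℕ → ℕ, (∀ n, α n ≤ β n) → U β ⊆ U α) ∧
      (∀ α : ℕ → ℕ,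
        (⋃ k : ℕ, ⋂ β ∈ {β : ℕ → ℕ | ∀ i ≤ k, β i = α i}, U β) ∈ @nhds G τBS 1) := by
  choose W hW1 hW2 hW3 using T.exists_symm_base hmetr
  have hWone : ∀ n i, (1 : G) ∈ W n i := fun n i => (hW1 n i).2.2.1
  set Ufun : (ℕ → ℕ) → Set G := fun α => bsU (fun n => W n (α n)) (α 0) with hUdef
  have hmem : ∀ α, Ufun α ∈ @nhds G τBS 1 := by
    intro α
    have := (hBS 1).mem_of_mem (i := (fun n => W n (α n), α 0)) (fun n => hW1 n (α n))
    simpa using this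
  refine ⟨Ufun, hmem, ?_, ?_, ?_⟩
  · -- cofinality
    intro s hs
    obtain ⟨⟨V, k⟩, hV, hsub⟩ := (hBS 1).mem_iff.1 hs
    rw [one_smul] at hsub
    choose idx hidx using fun n => hW3 n (V n) (hV n)
    refine ⟨fun n => max (idx n) k, ?_⟩
    have h1 : ∀ n, W n (max (idx n) k) ⊆ V n := fun n =>
      (hW2 n (idx n) _ (le_max_left _ _)).trans (hidx n)
    have h2 : bsU (fun n => W n (max (idx n) k)) (max (idx 0) k) ⊆
        bsU (fun n => W n (max (idx n) k)) k :=
      bsU_antitone_k (fun n => hWone n _) (le_max_right _ _)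
    exact (h2.trans (bsU_mono h1 k)).trans hsub
  · -- monotonicity
    intro α β hab
    have h1 : bsU (fun n => W n (β n)) (β 0) ⊆ bsU (fun n => W n (β n)) (α 0) :=
      bsU_antitone_k (fun n => hWone n _) (hab 0)
    exact h1.trans (bsU_mono (fun n => hW2 n (α n) (β n) (hab n)) (α 0))
  · -- condition (D)
    intro α
    refine Filter.mem_of_superset (hmem α) ?_
    intro x hx
    obtain ⟨a, ha, b, hb, rfl⟩ := Set.mem_mul.1 hx
    rw [Set.mem_inv] at ha
    obtain ⟨j1, hj1⟩ := Set.mem_iUnion.1 ha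
    obtain ⟨j2, hj2⟩ := Set.mem_iUnion.1 hb
    refine Set.mem_iUnion.2 ⟨α 0 + j1 + j2, ?_⟩
    refine Set.mem_iInter₂.2 fun β hβ => ?_
    have hβ0 : β 0 = α 0 := hβ 0 (Nat.zero_le _)
    have hcongr : ∀ j ≤ j1 + j2,
        bsProd (fun n => W n (α n)) (α 0) j = bsProd (fun n => W n (β n)) (α 0) j := by
      intro j hj
      refine bsProd_congr fun i hi => ?_
      have : β (α 0 + i) = α (α 0 + i) := hβ (α 0 + i) (by omega)
      rw [this]
    have ha' : a⁻¹ ∈ bsPlus (fun n => W n (β n)) (β 0) := by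
      rw [hβ0]
      exact Set.mem_iUnion.2 ⟨j1, (hcongr j1 (by omega)) ▸ hj1⟩
    have hb' : b ∈ bsPlus (fun n => W n (β n)) (β 0) := by
      rw [hβ0]
      exact Set.mem_iUnion.2 ⟨j2, (hcongr j2 (by omega)) ▸ hj2⟩
    exact Set.mul_mem_mul (Set.mem_inv.2 ha') hb'
end
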